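/- arXiv:0706.1037 — 2 statements merged into one kernel-verified Lean document; each statement's English description precedes it below -/
import Mathlib

section
/- Let γ : [0,L] → ℝⁿ be a C² curve parametrized by arclength with constant curvature 1 (i.e. ‖γ'(t)‖ = ‖γ''(t)‖ = 1 for all t), and let V : [0,L] → ℝⁿ be a C² vector field along γ with V(t)·γ'(t) = 0 for all t. Define γ_ε(t) = γ(t) + εV(t). Then the derivative at ε = 0 of the curvature κγ_ε(t) equals γ''(t)·V''(t) − 2γ'(t)·V'(t). -/
/-!
Differentiating `‖γ'‖² = 1` along the nondegenerate interval gives `γ' ⟂ γ''`, so at `ε = 0` the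
numerator vector `(γ'·γ') γ'' − (γ''·γ') γ'` of the curvature is just `γ''`, a unit vector. Its
derivative in `ε` is `V'' + 2 (γ'·V') γ'' − (γ''·V' + V''·γ') γ'`, so the numerator's norm moves at
rate `γ''·V'' + 2 γ'·V'`, while the denominator `‖γ' + ε V'‖⁴` moves at rate `4 γ'·V'`.
-/

noncomputable def curv {n : ℕ} (α : ℝ → EuclideanSpace ℝ (Fin n)) (t : ℝ) : ℝ :=
  ‖(inner ℝ (deriv α t) (deriv α t) : ℝ) • deriv (deriv α) t -
      (inner ℝ (deriv (deriv α) t) (deriv α t) : ℝ) • deriv α t‖ / ‖deriv α t‖ ^ 4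

open RealInnerProductSpace

section

variable {E : Type*} [NormedAddCommGroup E] [InnerProductSpace ℝ E]

theorem HasDerivAt.norm {f : ℝ → E} {f' : E} {x : ℝ} (hf : HasDerivAt f f' x) (h0 : f x ≠ 0) :
    HasDerivAt (‖f ·‖) (⟪f x, f'⟫ / ‖f x‖) x := by
  have hsq := hf.norm_sq.sqrt (by positivity)
  simp only [Real.sqrt_sq (norm_nonneg _)] at hsq
  convert hsq using 1
  field_simp

theorem HasDerivAt.inner_eq_zero_of_norm_eq_on {f : ℝ → E} {f' : E} {s : Set ℝ} {t r : ℝ}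
    (hf : HasDerivAt f f' t) (hs : UniqueDiffWithinAt ℝ s t) (ht : t ∈ s)
    (hnorm : ∀ x ∈ s, ‖f x‖ = r) : ⟪f t, f'⟫ = 0 := by
  have hconst : HasDerivWithinAt (‖f ·‖ ^ 2) 0 s t :=
    (hasDerivWithinAt_const t s (r ^ 2)).congr (fun x hx => by rw [hnorm x hx])
      (by rw [hnorm t ht])
  simpa using hs.eq_deriv _ hf.hasDerivWithinAt.norm_sq hconst

noncomputable def curvatureOfDerivs (u w : E) : ℝ :=
  ‖⟪u, u⟫ • w - ⟪w, u⟫ • u‖ / ‖u‖ ^ 4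

theorem hasDerivAt_curvatureOfDerivs_add_smul {a b c d : E} (ha : ‖a‖ = 1) (hb : ‖b‖ = 1)
    (hab : ⟪a, b⟫ = 0) :
    HasDerivAt (fun ε : ℝ => curvatureOfDerivs (a + ε • c) (b + ε • d))
      (⟪b, d⟫ - 2 * ⟪a, c⟫) 0 := by
  have hu : HasDerivAt (fun ε : ℝ => a + ε • c) c 0 := by
    simpa using ((hasDerivAt_id (0 : ℝ)).smul_const c).const_add a
  have hw : HasDerivAt (fun ε : ℝ => b + ε • d) d 0 := by
    simpa using ((hasDerivAt_id (0 : ℝ)).smul_const d).const_add b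
  have haa : ⟪a, a⟫ = 1 := by rw [real_inner_self_eq_norm_sq, ha, one_pow]
  have hba : ⟪b, a⟫ = 0 := by rw [real_inner_comm, hab]
  have ha0 : a ≠ 0 := norm_ne_zero_iff.mp (by rw [ha]; exact one_ne_zero)
  have hb0 : b ≠ 0 := norm_ne_zero_iff.mp (by rw [hb]; exact one_ne_zero)
  have hnum := (((hu.inner ℝ hu).smul hw).sub ((hw.inner ℝ hu).smul hu)).norm
    (by simp [ha0, hb0, hba])
  have hden := (hu.norm (by simpa using ha0)).pow 4
  refine (hnum.div hden (by simp [ha])).congr_deriv ?_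
  simp only [inner_self_eq_norm_sq_to_K, Real.ringHom_apply, inner_add_right, real_inner_comm, hab,
    inner_smul_right, zero_add, Pi.sub_apply, Pi.smul_apply', zero_smul, add_zero, ha, one_pow, one_smul,
    zero_mul, sub_zero, inner_sub_right, hb, mul_one, mul_zero, div_one, Pi.pow_apply, Nat.cast_ofNat,
    Nat.add_one_sub_one, one_mul]
  ring

end

theorem deriv_add_const_smul {F : Type*} [NormedAddCommGroup F] [NormedSpace ℝ F] {f g : ℝ → F}
    (hf : Differentiable ℝ f) (hg : Differentiable ℝ g) (ε : ℝ) :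
    deriv (fun s => f s + ε • g s) = fun s => deriv f s + ε • deriv g s :=
  funext fun s => ((hf s).hasDerivAt.add ((hg s).hasDerivAt.const_smul ε)).deriv

theorem first_variation_of_curvature_general {n : ℕ} (L : ℝ) (hL : 0 < L)
    (γ V : ℝ → EuclideanSpace ℝ (Fin n))
    (hγ : ContDiff ℝ 2 γ) (hV : ContDiff ℝ 2 V)
    (hunit : ∀ t ∈ Set.Icc (0 : ℝ) L, ‖deriv γ t‖ = 1)
    (hκ : ∀ t ∈ Set.Icc (0 : ℝ) L, ‖deriv (deriv γ) t‖ = 1) :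
    ∀ t ∈ Set.Icc (0 : ℝ) L,
      HasDerivAt (fun ε : ℝ => curv (fun s => γ s + ε • V s) t)
        ((inner ℝ (deriv (deriv γ) t) (deriv (deriv V) t) : ℝ)
          - 2 * (inner ℝ (deriv γ t) (deriv V t) : ℝ)) 0 := by
  intro t ht
  have hγ' := hγ.differentiable_deriv_two
  have hV' := hV.differentiable_deriv_two
  have hvariation : (fun ε : ℝ => curv (fun s => γ s + ε • V s) t) = fun ε =>
      curvatureOfDerivs (deriv γ t + ε • deriv V t)
        (deriv (deriv γ) t + ε • deriv (deriv V) t) := by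
    funext ε
    rw [curv, deriv_add_const_smul (hγ.differentiable two_ne_zero) (hV.differentiable two_ne_zero),
      deriv_add_const_smul hγ' hV', curvatureOfDerivs]
  have horth : ⟪deriv γ t, deriv (deriv γ) t⟫ = 0 :=
    (hγ' t).hasDerivAt.inner_eq_zero_of_norm_eq_on (uniqueDiffOn_Icc hL t ht) ht hunit
  rw [hvariation]
  exact hasDerivAt_curvatureOfDerivs_add_smul (hunit t ht) (hκ t ht) horth

/-- First variation of curvature for a normal variation of a unit-speed curve of
constant curvature 1. -/
theorem first_variation_of_curvature {n : ℕ} (L : ℝ) (hL : 0 < L)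
    (γ V : ℝ → EuclideanSpace ℝ (Fin n))
    (hγ : ContDiff ℝ 2 γ) (hV : ContDiff ℝ 2 V)
    (hunit : ∀ t ∈ Set.Icc (0 : ℝ) L, ‖deriv γ t‖ = 1)
    (hκ : ∀ t ∈ Set.Icc (0 : ℝ) L, ‖deriv (deriv γ) t‖ = 1)
    (horth : ∀ t ∈ Set.Icc (0 : ℝ) L, (inner ℝ (V t) (deriv γ t) : ℝ) = 0) :
    ∀ t ∈ Set.Icc (0 : ℝ) L,
      HasDerivAt (fun ε : ℝ => curv (fun s => γ s + ε • V s) t)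
        ((inner ℝ (deriv (deriv γ) t) (deriv (deriv V) t) : ℝ)
          - 2 * (inner ℝ (deriv γ t) (deriv V t) : ℝ)) 0 :=
  first_variation_of_curvature_general L hL γ V hγ hV hunit hκ
end

section
/- Let γ : ℝ/Lℤ → ℝⁿ be a C⁴ closed curve with constant curvature 1 and torsion bounded below by τ₀ > 0, and let Γ_ε be the rescaled normal variation as above. Then there exists ε₀ > 0 such that for all ε ∈ (0, ε₀) and all t, κΓ_ε(t) < 1; in particular sup_t κΓ_ε(t) < 1 for all such ε. -/
/-!
Write `T = γ'`, `N = γ''` and `w = γ''' + γ'`, which is `τ B` by the Frenet equations. Then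
`Γ' = (1 - ε) T + ε w` and `Γ'' = (1 - ε) N + ε w'`, and differentiating the orthonormality
relations gives `‖Γ'‖² = (1 - ε)² + ε² ‖w‖²`, `‖Γ''‖² = (1 - ε)² - 2 ε (1 - ε) ‖w‖² + ε² ‖w'‖²`
and `⟪Γ'', Γ'⟫ = ε² ⟪w', w⟫`. Rescaling to length `L` multiplies the curvature by at most the
maximal speed. Since `w` and `w'` are periodic, hence bounded, this yields a bound `B(ε)` on the
curvature, uniform in `t`, with `B(0) = 1` and `B'(0) = -τ₀² < 0`; so `B(ε) < 1` for small `ε > 0`.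
-/

open Filter Topology Set
open scoped RealInnerProductSpace

theorem HasDerivAt.eventually_lt_right_of_neg {f : ℝ → ℝ} {f' x : ℝ} (hf : HasDerivAt f f' x)
    (hf' : f' < 0) : ∀ᶠ z in 𝓝[>] x, f z < f x := by
  filter_upwards [hf.hasDerivWithinAt.limsup_slope_le' (lt_irrefl x) hf', self_mem_nhdsWithin]
    with z hslope hz
  rw [slope_def_field, div_neg_iff] at hslope
  rcases hslope with ⟨-, h⟩ | ⟨h, -⟩
  · exact absurd hz (not_lt.2 (sub_nonpos.1 h.le))
  · linarith

section Periodic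

variable {E : Type*} [NormedAddCommGroup E] {f : ℝ → E} {c : ℝ}

theorem Function.Periodic.deriv [NormedSpace ℝ E] (hf : Function.Periodic f c) :
    Function.Periodic (deriv f) c := by
  intro t
  rw [← deriv_comp_add_const, funext hf]

theorem Function.Periodic.exists_forall_norm_le (hf : Function.Periodic f c) (hc : c ≠ 0)
    (hcont : Continuous f) : ∃ M, ∀ t, ‖f t‖ ≤ M := by
  obtain ⟨M, hM⟩ := isBounded_iff_forall_norm_le.1 (hf.isBounded_of_continuous hc hcont)
  exact ⟨M, fun t => hM _ (mem_range_self t)⟩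

end Periodic

/-- The bound `σ (‖Γ''‖ / ‖Γ'‖² + |⟪Γ'', Γ'⟫| / ‖Γ'‖³)` on the curvature of the rescaled normal
variation, with `σ ≥ ‖Γ'‖ ≥ 1 - ε` and the other terms estimated through `τ₀ ≤ ‖w‖ ≤ M` and
`‖w'‖ ≤ M'` for the torsion vector `w`. -/
noncomputable def curvBound (τ₀ M M' ε : ℝ) : ℝ :=
  √((1 - ε) ^ 2 + ε ^ 2 * M ^ 2) *
    (√((1 - ε) ^ 2 - 2 * ε * (1 - ε) * τ₀ ^ 2 + ε ^ 2 * M' ^ 2) / (1 - ε) ^ 2 +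
      ε ^ 2 * (M * M') / (1 - ε) ^ 3)

theorem curvBound_zero (τ₀ M M' : ℝ) : curvBound τ₀ M M' 0 = 1 := by
  simp [curvBound]

theorem hasDerivAt_curvBound (τ₀ M M' : ℝ) : HasDerivAt (curvBound τ₀ M M') (-τ₀ ^ 2) 0 := by
  have hA : HasDerivAt (fun ε : ℝ => 1 - ε) (-1) 0 := by
    simpa using (hasDerivAt_id (0 : ℝ)).const_sub 1
  have hε := hasDerivAt_id' (0 : ℝ)
  have hσ := ((hA.pow 2).add ((hε.pow 2).mul_const (M ^ 2))).sqrt (by norm_num)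
  have hR := (((hA.pow 2).sub (((hε.const_mul 2).mul hA).mul_const (τ₀ ^ 2))).add
    ((hε.pow 2).mul_const (M' ^ 2))).sqrt (by norm_num)
  refine (hσ.mul ((hR.div (hA.pow 2) (by norm_num)).add
    (((hε.pow 2).mul_const (M * M')).div (hA.pow 3) (by norm_num)))).congr_deriv ?_
  norm_num
  ring

theorem eventually_curvBound_lt_one {τ₀ : ℝ} (hτ₀ : 0 < τ₀) (M M' : ℝ) :
    ∀ᶠ ε in 𝓝[>] 0, curvBound τ₀ M M' ε < 1 := by
  simpa [curvBound_zero] using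
    (hasDerivAt_curvBound τ₀ M M').eventually_lt_right_of_neg (neg_neg_of_pos (pow_pos hτ₀ 2))

section Curvature

variable {n : ℕ}

theorem curv_nonneg (α : ℝ → EuclideanSpace ℝ (Fin n)) (t : ℝ) : 0 ≤ curv α t := by
  unfold curv; positivity

theorem curv_const_smul (c : ℝ) (α : ℝ → EuclideanSpace ℝ (Fin n)) (t : ℝ) :
    curv (fun s => c • α s) t = curv α t / |c| := by
  have h₁ : deriv (fun s => c • α s) = fun s => c • deriv α s :=
    funext fun s => deriv_fun_const_smul_field c α
  have h₂ : deriv (fun s => c • deriv α s) = fun s => c • deriv (deriv α) s :=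
    funext fun s => deriv_fun_const_smul_field c (deriv α)
  rcases eq_or_ne c 0 with rfl | hc
  · simp [curv]
  unfold curv
  rw [h₁, h₂]
  simp only [real_inner_smul_left, real_inner_smul_right]
  rw [show ∀ a b : ℝ, ∀ v x : EuclideanSpace ℝ (Fin n),
      (c * (c * a)) • c • x - (c * (c * b)) • c • v = c ^ 3 • (a • x - b • v) from
    fun a b v x => by module]
  simp only [norm_smul, Real.norm_eq_abs, abs_pow, mul_pow]
  have : 0 < |c| := abs_pos.2 hc
  field_simp

theorem curv_le (α : ℝ → EuclideanSpace ℝ (Fin n)) (t : ℝ) :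
    curv α t ≤ ‖deriv (deriv α) t‖ / ‖deriv α t‖ ^ 2 +
      |⟪deriv (deriv α) t, deriv α t⟫| / ‖deriv α t‖ ^ 3 := by
  set v := deriv α t
  set a := deriv (deriv α) t
  rcases eq_or_ne ‖v‖ 0 with hv | hv
  · simp [curv, norm_eq_zero.1 hv, v]
  have hv : 0 < ‖v‖ := (norm_nonneg v).lt_of_ne' hv
  calc curv α t ≤ (‖v‖ ^ 2 * ‖a‖ + |⟪a, v⟫| * ‖v‖) / ‖v‖ ^ 4 := by
        unfold curv
        gcongr
        refine (norm_sub_le _ _).trans_eq ?_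
        rw [norm_smul, norm_smul, real_inner_self_eq_norm_sq, Real.norm_eq_abs,
          Real.norm_eq_abs, abs_of_nonneg (sq_nonneg _)]
    _ = ‖a‖ / ‖v‖ ^ 2 + |⟪a, v⟫| / ‖v‖ ^ 3 := by
        field_simp

theorem curv_rescale_le {α : ℝ → EuclideanSpace ℝ (Fin n)} {L σ : ℝ} (hL : 0 < L)
    (hσ : ∀ u ∈ uIoc 0 L, ‖deriv α u‖ ≤ σ) (t : ℝ) :
    curv (fun s => (L / ∫ u in (0 : ℝ)..L, ‖deriv α u‖) • α s) t ≤ σ * curv α t := by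
  have hlength : |∫ u in (0 : ℝ)..L, ‖deriv α u‖| ≤ σ * L := by
    have := intervalIntegral.norm_integral_le_of_norm_le_const
      (f := fun u => ‖deriv α u‖) (by simpa using hσ)
    rwa [sub_zero, abs_of_pos hL, Real.norm_eq_abs] at this
  rw [curv_const_smul, abs_div, abs_of_pos hL, div_div_eq_mul_div, div_le_iff₀ hL]
  nlinarith [mul_le_mul_of_nonneg_left hlength (curv_nonneg α t)]

end Curvature

section FrenetFrame

variable {E : Type*} [NormedAddCommGroup E] [InnerProductSpace ℝ E]

theorem inner_deriv_add_inner_deriv_eq_zero {f g : ℝ → E} (hf : Differentiable ℝ f)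
    (hg : Differentiable ℝ g) {c : ℝ} (h : ∀ t, ⟪f t, g t⟫ = c) (t : ℝ) :
    ⟪deriv f t, g t⟫ + ⟪f t, deriv g t⟫ = 0 := by
  have hderiv := (hf t).hasDerivAt.inner ℝ (hg t).hasDerivAt
  rw [funext h] at hderiv
  rw [add_comm]
  exact hderiv.unique (hasDerivAt_const t c)

theorem inner_deriv_eq_zero_of_forall_norm_eq {f : ℝ → E} (hf : Differentiable ℝ f) {r : ℝ}
    (h : ∀ t, ‖f t‖ = r) (t : ℝ) : ⟪f t, deriv f t⟫ = 0 := by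
  have := inner_deriv_add_inner_deriv_eq_zero hf hf (c := r ^ 2)
    (fun s => by rw [real_inner_self_eq_norm_sq, h]) t
  rw [real_inner_comm] at this
  linarith

/-- For a unit-speed curve of curvature one the Frenet equations give `γ''' = -T + τ B`,
so this is `τ B`. -/
noncomputable def torsionVector (γ : ℝ → E) (t : ℝ) : E :=
  deriv (deriv (deriv γ)) t + deriv γ t

variable {γ : ℝ → E}

theorem Function.Periodic.torsionVector {L : ℝ} (hγ : Function.Periodic γ L) :
    Function.Periodic (torsionVector γ) L :=
  hγ.deriv.deriv.deriv.add hγ.deriv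

theorem contDiff_torsionVector (hγ : ContDiff ℝ 4 γ) : ContDiff ℝ 1 (torsionVector γ) :=
  (hγ.iterate_deriv' 1 3).add ((hγ.of_le (by norm_num)).iterate_deriv' 1 1)

theorem differentiable_torsionVector (h₁ : Differentiable ℝ (deriv γ))
    (h₃ : Differentiable ℝ (deriv (deriv (deriv γ)))) : Differentiable ℝ (torsionVector γ) :=
  h₃.add h₁

theorem inner_torsionVector_deriv (h₁ : Differentiable ℝ (deriv γ))
    (h₂ : Differentiable ℝ (deriv (deriv γ))) (hunit : ∀ t, ‖deriv γ t‖ = 1)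
    (hκ : ∀ t, ‖deriv (deriv γ) t‖ = 1) (t : ℝ) : ⟪torsionVector γ t, deriv γ t⟫ = 0 := by
  have hTN := inner_deriv_eq_zero_of_forall_norm_eq h₁ hunit
  have := inner_deriv_add_inner_deriv_eq_zero h₂ h₁ (c := 0)
    (fun s => by rw [real_inner_comm, hTN]) t
  rw [real_inner_self_eq_norm_sq, hκ] at this
  rw [torsionVector, inner_add_left, real_inner_self_eq_norm_sq, hunit]
  linarith

theorem inner_torsionVector_deriv_deriv (h₁ : Differentiable ℝ (deriv γ))
    (h₂ : Differentiable ℝ (deriv (deriv γ))) (hunit : ∀ t, ‖deriv γ t‖ = 1)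
    (hκ : ∀ t, ‖deriv (deriv γ) t‖ = 1) (t : ℝ) :
    ⟪torsionVector γ t, deriv (deriv γ) t⟫ = 0 := by
  rw [torsionVector, inner_add_left, real_inner_comm, inner_deriv_eq_zero_of_forall_norm_eq h₂ hκ,
    inner_deriv_eq_zero_of_forall_norm_eq h₁ hunit, add_zero]

theorem inner_deriv_torsionVector_deriv (h₁ : Differentiable ℝ (deriv γ))
    (h₂ : Differentiable ℝ (deriv (deriv γ))) (h₃ : Differentiable ℝ (deriv (deriv (deriv γ))))
    (hunit : ∀ t, ‖deriv γ t‖ = 1) (hκ : ∀ t, ‖deriv (deriv γ) t‖ = 1) (t : ℝ) :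
    ⟪deriv (torsionVector γ) t, deriv γ t⟫ = 0 := by
  have := inner_deriv_add_inner_deriv_eq_zero (differentiable_torsionVector h₁ h₃) h₁
    (inner_torsionVector_deriv h₁ h₂ hunit hκ) t
  rwa [inner_torsionVector_deriv_deriv h₁ h₂ hunit hκ, add_zero] at this

theorem inner_deriv_deriv_deriv_torsionVector (h₁ : Differentiable ℝ (deriv γ))
    (h₂ : Differentiable ℝ (deriv (deriv γ))) (h₃ : Differentiable ℝ (deriv (deriv (deriv γ))))
    (hunit : ∀ t, ‖deriv γ t‖ = 1) (hκ : ∀ t, ‖deriv (deriv γ) t‖ = 1) (t : ℝ) :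
    ⟪deriv (deriv γ) t, deriv (torsionVector γ) t⟫ = -‖torsionVector γ t‖ ^ 2 := by
  have := inner_deriv_add_inner_deriv_eq_zero h₂ (differentiable_torsionVector h₁ h₃)
    (fun s => by rw [real_inner_comm, inner_torsionVector_deriv_deriv h₁ h₂ hunit hκ]) t
  have hJ : deriv (deriv (deriv γ)) t = torsionVector γ t - deriv γ t := by
    simp [torsionVector]
  rw [hJ, inner_sub_left, real_inner_self_eq_norm_sq, real_inner_comm,
    inner_torsionVector_deriv h₁ h₂ hunit hκ] at this
  linarith

end FrenetFrame

section NormalVariation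

variable {E : Type*} [NormedAddCommGroup E] [InnerProductSpace ℝ E] {γ : ℝ → E}

/-- The paper's `Γ_ε` is this curve rescaled by `L / length`. -/
noncomputable def normalVariation (γ : ℝ → E) (ε : ℝ) (t : ℝ) : E :=
  γ t + ε • deriv (deriv γ) t

theorem deriv_normalVariation (h₀ : Differentiable ℝ γ) (h₂ : Differentiable ℝ (deriv (deriv γ)))
    (ε : ℝ) :
    deriv (normalVariation γ ε) = fun t => (1 - ε) • deriv γ t + ε • torsionVector γ t := by
  funext t
  refine ((h₀ t).hasDerivAt.add ((h₂ t).hasDerivAt.const_smul ε)).deriv.trans ?_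
  simp only [torsionVector]
  module

theorem deriv_deriv_normalVariation (h₀ : Differentiable ℝ γ) (h₁ : Differentiable ℝ (deriv γ))
    (h₂ : Differentiable ℝ (deriv (deriv γ))) (h₃ : Differentiable ℝ (deriv (deriv (deriv γ))))
    (ε : ℝ) :
    deriv (deriv (normalVariation γ ε)) =
      fun t => (1 - ε) • deriv (deriv γ) t + ε • deriv (torsionVector γ) t := by
  rw [deriv_normalVariation h₀ h₂]
  funext t
  exact (((h₁ t).hasDerivAt.const_smul (1 - ε)).add
    ((differentiable_torsionVector h₁ h₃ t).hasDerivAt.const_smul ε)).deriv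

theorem norm_deriv_normalVariation_sq (h₀ : Differentiable ℝ γ) (h₁ : Differentiable ℝ (deriv γ))
    (h₂ : Differentiable ℝ (deriv (deriv γ))) (hunit : ∀ t, ‖deriv γ t‖ = 1)
    (hκ : ∀ t, ‖deriv (deriv γ) t‖ = 1) (ε t : ℝ) :
    ‖deriv (normalVariation γ ε) t‖ ^ 2 = (1 - ε) ^ 2 + ε ^ 2 * ‖torsionVector γ t‖ ^ 2 := by
  rw [deriv_normalVariation h₀ h₂, norm_add_sq_real, real_inner_smul_left, real_inner_smul_right,
    real_inner_comm, inner_torsionVector_deriv h₁ h₂ hunit hκ, norm_smul, norm_smul, hunit]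
  simp only [Real.norm_eq_abs, mul_pow, sq_abs]
  ring

theorem norm_deriv_deriv_normalVariation_sq (h₀ : Differentiable ℝ γ)
    (h₁ : Differentiable ℝ (deriv γ)) (h₂ : Differentiable ℝ (deriv (deriv γ)))
    (h₃ : Differentiable ℝ (deriv (deriv (deriv γ)))) (hunit : ∀ t, ‖deriv γ t‖ = 1)
    (hκ : ∀ t, ‖deriv (deriv γ) t‖ = 1) (ε t : ℝ) :
    ‖deriv (deriv (normalVariation γ ε)) t‖ ^ 2 =
      (1 - ε) ^ 2 - 2 * ε * (1 - ε) * ‖torsionVector γ t‖ ^ 2 +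
        ε ^ 2 * ‖deriv (torsionVector γ) t‖ ^ 2 := by
  rw [deriv_deriv_normalVariation h₀ h₁ h₂ h₃, norm_add_sq_real, real_inner_smul_left,
    real_inner_smul_right, inner_deriv_deriv_deriv_torsionVector h₁ h₂ h₃ hunit hκ, norm_smul,
    norm_smul, hκ]
  simp only [Real.norm_eq_abs, mul_pow, sq_abs]
  ring

theorem inner_deriv_deriv_normalVariation (h₀ : Differentiable ℝ γ)
    (h₁ : Differentiable ℝ (deriv γ)) (h₂ : Differentiable ℝ (deriv (deriv γ)))
    (h₃ : Differentiable ℝ (deriv (deriv (deriv γ)))) (hunit : ∀ t, ‖deriv γ t‖ = 1)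
    (hκ : ∀ t, ‖deriv (deriv γ) t‖ = 1) (ε t : ℝ) :
    ⟪deriv (deriv (normalVariation γ ε)) t, deriv (normalVariation γ ε) t⟫ =
      ε ^ 2 * ⟪deriv (torsionVector γ) t, torsionVector γ t⟫ := by
  rw [deriv_deriv_normalVariation h₀ h₁ h₂ h₃, deriv_normalVariation h₀ h₂]
  simp only [inner_add_left, inner_add_right, real_inner_smul_left, real_inner_smul_right]
  rw [real_inner_comm (deriv γ t), inner_deriv_eq_zero_of_forall_norm_eq h₁ hunit,
    real_inner_comm (torsionVector γ t), inner_torsionVector_deriv_deriv h₁ h₂ hunit hκ,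
    inner_deriv_torsionVector_deriv h₁ h₂ h₃ hunit hκ]
  ring

end NormalVariation

section Estimates

variable {n : ℕ} {γ : ℝ → EuclideanSpace ℝ (Fin n)} {τ₀ M M' ε t : ℝ}

theorem norm_deriv_normalVariation_le (h₀ : Differentiable ℝ γ)
    (h₁ : Differentiable ℝ (deriv γ)) (h₂ : Differentiable ℝ (deriv (deriv γ)))
    (hunit : ∀ t, ‖deriv γ t‖ = 1) (hκ : ∀ t, ‖deriv (deriv γ) t‖ = 1)
    (hM : ‖torsionVector γ t‖ ≤ M) :
    ‖deriv (normalVariation γ ε) t‖ ≤ √((1 - ε) ^ 2 + ε ^ 2 * M ^ 2) := by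
  refine Real.le_sqrt_of_sq_le ?_
  rw [norm_deriv_normalVariation_sq h₀ h₁ h₂ hunit hκ]
  gcongr

theorem curv_normalVariation_le (h₀ : Differentiable ℝ γ)
    (h₁ : Differentiable ℝ (deriv γ)) (h₂ : Differentiable ℝ (deriv (deriv γ)))
    (h₃ : Differentiable ℝ (deriv (deriv (deriv γ)))) (hunit : ∀ t, ‖deriv γ t‖ = 1)
    (hκ : ∀ t, ‖deriv (deriv γ) t‖ = 1) (hτ₀ : 0 ≤ τ₀) (hτ : τ₀ ≤ ‖torsionVector γ t‖)
    (hM : ‖torsionVector γ t‖ ≤ M) (hM' : ‖deriv (torsionVector γ) t‖ ≤ M')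
    (hε : ε ∈ Ioo 0 1) :
    curv (normalVariation γ ε) t ≤
      √((1 - ε) ^ 2 - 2 * ε * (1 - ε) * τ₀ ^ 2 + ε ^ 2 * M' ^ 2) / (1 - ε) ^ 2 +
        ε ^ 2 * (M * M') / (1 - ε) ^ 3 := by
  obtain ⟨hε₀, hε₁⟩ := hε
  have hA : 0 < 1 - ε := sub_pos.2 hε₁
  have hspeed : 1 - ε ≤ ‖deriv (normalVariation γ ε) t‖ := by
    refine abs_le_of_sq_le_sq' ?_ (norm_nonneg _) |>.2
    rw [norm_deriv_normalVariation_sq h₀ h₁ h₂ hunit hκ]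
    nlinarith
  have hacc : ‖deriv (deriv (normalVariation γ ε)) t‖ ≤
      √((1 - ε) ^ 2 - 2 * ε * (1 - ε) * τ₀ ^ 2 + ε ^ 2 * M' ^ 2) := by
    refine Real.le_sqrt_of_sq_le ?_
    rw [norm_deriv_deriv_normalVariation_sq h₀ h₁ h₂ h₃ hunit hκ]
    have : ε * (1 - ε) * τ₀ ^ 2 ≤ ε * (1 - ε) * ‖torsionVector γ t‖ ^ 2 := by gcongr
    have : ε ^ 2 * ‖deriv (torsionVector γ) t‖ ^ 2 ≤ ε ^ 2 * M' ^ 2 := by gcongr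
    linarith
  have hinner : |⟪deriv (deriv (normalVariation γ ε)) t, deriv (normalVariation γ ε) t⟫| ≤
      ε ^ 2 * (M * M') := by
    rw [inner_deriv_deriv_normalVariation h₀ h₁ h₂ h₃ hunit hκ, abs_mul, abs_sq, mul_comm M]
    gcongr
    exact (abs_real_inner_le_norm _ _).trans (by gcongr; exact (norm_nonneg _).trans hM')
  have hMM' : 0 ≤ ε ^ 2 * (M * M') := (abs_nonneg _).trans hinner
  calc curv (normalVariation γ ε) t ≤ _ := curv_le _ t
    _ ≤ _ := by gcongr

theorem curv_rescaled_normalVariation_le (hγ : ContDiff ℝ 4 γ) (hunit : ∀ t, ‖deriv γ t‖ = 1)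
    (hκ : ∀ t, ‖deriv (deriv γ) t‖ = 1) (hτ₀ : 0 ≤ τ₀) (hτ : ∀ t, τ₀ ≤ ‖torsionVector γ t‖)
    (hM : ∀ t, ‖torsionVector γ t‖ ≤ M) (hM' : ∀ t, ‖deriv (torsionVector γ) t‖ ≤ M')
    {L : ℝ} (hL : 0 < L) (hε : ε ∈ Ioo 0 1) (t : ℝ) :
    curv (fun s => (L / ∫ u in (0 : ℝ)..L, ‖deriv (normalVariation γ ε) u‖) •
      normalVariation γ ε s) t ≤ curvBound τ₀ M M' ε := by
  have h₀ : Differentiable ℝ γ := hγ.differentiable (by norm_num)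
  have h₁ : Differentiable ℝ (deriv γ) :=
    ((hγ.of_le (by norm_num)).iterate_deriv' 1 1).differentiable one_ne_zero
  have h₂ : Differentiable ℝ (deriv (deriv γ)) :=
    ((hγ.of_le (by norm_num)).iterate_deriv' 1 2).differentiable one_ne_zero
  have h₃ : Differentiable ℝ (deriv (deriv (deriv γ))) :=
    (hγ.iterate_deriv' 1 3).differentiable one_ne_zero
  calc _ ≤ √((1 - ε) ^ 2 + ε ^ 2 * M ^ 2) * curv (normalVariation γ ε) t :=
        curv_rescale_le hL (fun u _ => norm_deriv_normalVariation_le h₀ h₁ h₂ hunit hκ (hM u)) t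
    _ ≤ curvBound τ₀ M M' ε := mul_le_mul_of_nonneg_left
        (curv_normalVariation_le h₀ h₁ h₂ h₃ hunit hκ hτ₀ (hτ t) (hM t) (hM' t) hε)
        (Real.sqrt_nonneg _)

end Estimates

/-- For a closed unit-speed C⁴ curve of constant curvature 1 with torsion bounded
below by τ₀ > 0, the rescaled normal variation Γ_ε has curvature < 1 everywhere
for all small ε > 0; in particular its supremum over the curve is < 1. -/
theorem small_normal_variation_has_curvature_lt_one {n : ℕ} (L τ₀ : ℝ)
    (hL : 0 < L) (hτ₀ : 0 < τ₀)
    (γ : ℝ → EuclideanSpace ℝ (Fin n)) (hγ : ContDiff ℝ 4 γ)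
    (hper : Function.Periodic γ L)
    (hunit : ∀ t, ‖deriv γ t‖ = 1)
    (hκ : ∀ t, ‖deriv (deriv γ) t‖ = 1)
    (hτ : ∀ t, τ₀ ≤ ‖deriv (deriv (deriv γ)) t + deriv γ t‖) :
    ∃ ε₀ > 0, ∀ ε ∈ Set.Ioo (0 : ℝ) ε₀,
      (∀ t : ℝ,
        curv (fun s =>
          (L / ∫ u in (0:ℝ)..L,
              ‖deriv (fun r => γ r + ε • deriv (deriv γ) r) u‖) •
            (γ s + ε • deriv (deriv γ) s)) t < 1) ∧
      (⨆ t : Set.Icc (0 : ℝ) L,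
        curv (fun s =>
          (L / ∫ u in (0:ℝ)..L,
              ‖deriv (fun r => γ r + ε • deriv (deriv γ) r) u‖) •
            (γ s + ε • deriv (deriv γ) s)) t) < 1 := by
  obtain ⟨M, hM⟩ := hper.torsionVector.exists_forall_norm_le hL.ne'
    (contDiff_torsionVector hγ).continuous
  obtain ⟨M', hM'⟩ := hper.torsionVector.deriv.exists_forall_norm_le hL.ne'
    (contDiff_torsionVector hγ).continuous_deriv_one
  obtain ⟨ε₀, hε₀, hsmall⟩ := mem_nhdsGT_iff_exists_Ioo_subset.1
    ((eventually_curvBound_lt_one hτ₀ M M').and (Ioo_mem_nhdsGT one_pos))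
  refine ⟨ε₀, hε₀, fun ε hε => ?_⟩
  obtain ⟨hlt, hε₁⟩ := hsmall hε
  have hbound (t : ℝ) := curv_rescaled_normalVariation_le hγ hunit hκ hτ₀.le hτ hM hM' hL hε₁ t
  have : Nonempty (Icc 0 L) := (nonempty_Icc.2 hL.le).to_subtype
  exact ⟨fun t => (hbound t).trans_lt hlt, (ciSup_le fun t : Icc 0 L => hbound t).trans_lt hlt⟩
end
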